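/- arXiv:2011.13454 — 2 statements merged into one kernel-verified Lean document; each statement's English description precedes it below -/
import Mathlib

section
/- (SEU upper bound.) Let D be a finite database of q-sequences and let t' be a proper extension-prefix of a sequence t. Then u(t) ≤ SEU(t'), where u(t) = Σ_{s∈D, t⊑s} u(t,s) and SEU(t') = Σ_{s∈D, t'⊑s} (u(t',s) + u_rest(t',s)). -/
open scoped Classical

namespace TKUS

variable {I : Type*} [Fintype I] [LinearOrder I]

/-- `p` is the (0-based) position list of an instance of the sequence `t`
in the q-sequence `s`. -/
def IsInstance (s : List (I →₀ ℕ)) (t : List (Finset I)) (p : List ℕ) : Prop :=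
  p.length = t.length ∧ p.Chain' (· < ·) ∧
    ∀ v < t.length, p.getD v 0 < s.length ∧
      ∀ i ∈ t.getD v ∅, 0 < s.getD (p.getD v 0) 0 i

/-- `t ⊑ s` : `t` has at least one instance in `s`. -/
def Contains (s : List (I →₀ ℕ)) (t : List (Finset I)) : Prop :=
  ∃ p, IsInstance s t p

/-- `u(t,p,s)` : utility of `t` at position `p` in `s`. -/
def uPos (eu : I → ℝ) (s : List (I →₀ ℕ)) (t : List (Finset I)) (p : List ℕ) : ℝ :=
  ∑ v ∈ Finset.range t.length, ∑ i ∈ t.getD v ∅,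
    (s.getD (p.getD v 0) 0 i : ℝ) * eu i

/-- `u(t,s)` : the maximum utility over all instances of `t` in `s` (`0` if none). -/
noncomputable def uSeq (eu : I → ℝ) (s : List (I →₀ ℕ)) (t : List (Finset I)) : ℝ :=
  sSup {x | ∃ p, IsInstance s t p ∧ x = uPos eu s t p}

/-- the greatest item of the last itemset of `t`, as an element of `WithBot I`. -/
def iLast (t : List (Finset I)) : WithBot I :=
  (t.getLast?.getD ∅).max

/-- `u_rest(t,k,s)` : remaining utility of `t` at extension position `k` in `s`. -/
def uRest (eu : I → ℝ) (s : List (I →₀ ℕ)) (t : List (Finset I)) (k : ℕ) : ℝ :=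
  ∑ j ∈ Finset.range s.length, ∑ i ∈ (s.getD j 0).support,
    if k < j ∨ (j = k ∧ iLast t < (i : WithBot I)) then (s.getD j 0 i : ℝ) * eu i else 0

/-- `k` is an extension position of `t` in `s`. -/
def ExtPos (s : List (I →₀ ℕ)) (t : List (Finset I)) (k : ℕ) : Prop :=
  ∃ p, IsInstance s t p ∧ p.getLast?.getD 0 = k

/-- the pivot : the least extension position of `t` in `s`. -/
noncomputable def pivot (s : List (I →₀ ℕ)) (t : List (Finset I)) : ℕ :=
  sInf {k | ExtPos s t k}

/-- `u_rest(t,s)` : remaining utility of `t` at the pivot. -/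
noncomputable def uRestSeq (eu : I → ℝ) (s : List (I →₀ ℕ)) (t : List (Finset I)) : ℝ :=
  uRest eu s t (pivot s t)

/-- `PEU(t,p,s)`. -/
noncomputable def PEUpos (eu : I → ℝ) (s : List (I →₀ ℕ)) (t : List (Finset I))
    (p : List ℕ) : ℝ :=
  if 0 < uRest eu s t (p.getLast?.getD 0) then
    uPos eu s t p + uRest eu s t (p.getLast?.getD 0)
  else 0

/-- `PEU(t,s)` : maximum of `PEU(t,p,s)` over all instances. -/
noncomputable def PEUseq (eu : I → ℝ) (s : List (I →₀ ℕ)) (t : List (Finset I)) : ℝ :=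
  sSup {x | ∃ p, IsInstance s t p ∧ x = PEUpos eu s t p}

/-- `t'` is an extension-prefix of `t` : `t' = ⟨X₁,…,X_{r−1}, X'_r⟩` where
`X'_r` is a nonempty lower segment of `X_r`. -/
def ExtPrefix (t' t : List (Finset I)) : Prop :=
  t' ≠ [] ∧ t'.length ≤ t.length ∧
    (∀ v, v + 1 < t'.length → t'.getD v ∅ = t.getD v ∅) ∧
    (t'.getD (t'.length - 1) ∅).Nonempty ∧
    t'.getD (t'.length - 1) ∅ ⊆ t.getD (t'.length - 1) ∅ ∧
    ∀ a ∈ t.getD (t'.length - 1) ∅ \ t'.getD (t'.length - 1) ∅,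
      ∀ b ∈ t'.getD (t'.length - 1) ∅, b < a

/-- `t'` is a proper extension-prefix of `t`. -/
def ProperExtPrefix (t' t : List (Finset I)) : Prop :=
  ExtPrefix t' t ∧ t' ≠ t

/-- the length (total number of item occurrences) of a sequence. -/
def seqLen (t : List (Finset I)) : ℕ :=
  (t.map Finset.card).sum

/-- remove the greatest item from a finite itemset. -/
def delMax (X : Finset I) : Finset I :=
  X.filter fun i => (i : WithBot I) ≠ X.max

/-- the parent of a sequence: delete the greatest item of the last itemset
(dropping that itemset entirely if it becomes empty). -/
def parent (t : List (Finset I)) : List (Finset I) :=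
  match t.getLast? with
  | none => []
  | some X => if delMax X = ∅ then t.dropLast else t.dropLast ++ [delMax X]

/-- `u(s)` : utility of a whole q-sequence. -/
def uQ (eu : I → ℝ) (s : List (I →₀ ℕ)) : ℝ :=
  ∑ j ∈ Finset.range s.length, ∑ i ∈ (s.getD j 0).support,
    (s.getD j 0 i : ℝ) * eu i

/-- `u(t)` : utility of `t` in a database `D`. -/
noncomputable def uDB (eu : I → ℝ) (D : Multiset (List (I →₀ ℕ)))
    (t : List (Finset I)) : ℝ :=
  (D.map fun s => if Contains s t then uSeq eu s t else 0).sum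

/-- `PEU(t)` over a database. -/
noncomputable def PEUDB (eu : I → ℝ) (D : Multiset (List (I →₀ ℕ)))
    (t : List (Finset I)) : ℝ :=
  (D.map fun s => if Contains s t then PEUseq eu s t else 0).sum

/-- `RSU(t,s)`. -/
noncomputable def RSUseq (eu : I → ℝ) (s : List (I →₀ ℕ)) (t : List (Finset I)) : ℝ :=
  if Contains s t then PEUseq eu s (parent t) else 0

/-- `RSU(t)` over a database. -/
noncomputable def RSUDB (eu : I → ℝ) (D : Multiset (List (I →₀ ℕ)))
    (t : List (Finset I)) : ℝ :=
  (D.map fun s => RSUseq eu s t).sum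

/-- `SWU(t)` over a database. -/
noncomputable def SWUDB (eu : I → ℝ) (D : Multiset (List (I →₀ ℕ)))
    (t : List (Finset I)) : ℝ :=
  (D.map fun s => if Contains s t then uQ eu s else 0).sum

/-- `SEU(t)` over a database. -/
noncomputable def SEUDB (eu : I → ℝ) (D : Multiset (List (I →₀ ℕ)))
    (t : List (Finset I)) : ℝ :=
  (D.map fun s => if Contains s t then uSeq eu s t + uRestSeq eu s t else 0).sum

/-- `t' ⊴ t` : `t'` is a subsequence of `t`. -/
def Subseq (t' t : List (Finset I)) : Prop :=
  ∃ p : List ℕ, p.length = t'.length ∧ p.Chain' (· < ·) ∧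
    ∀ v < t'.length, p.getD v 0 < t.length ∧ t'.getD v ∅ ⊆ t.getD (p.getD v 0) ∅

/-- `t` is a top-k HUSP with respect to the candidate set `C`. -/
def IsTopK (eu : I → ℝ) (D : Multiset (List (I →₀ ℕ))) (k : ℕ)
    (C : Finset (List (Finset I))) (t : List (Finset I)) : Prop :=
  t ∈ C ∧ (C.filter fun r => uDB eu D t < uDB eu D r).card < k


section AuxProofs

variable {I : Type*} [Fintype I] [LinearOrder I]

private lemma getD_last_eq {α : Type*} (l : List α) (h : l ≠ []) (d : α) :
    l.getLast?.getD d = l.getD (l.length - 1) d := by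
  have hl : 0 < l.length := List.length_pos_iff.mpr h
  rw [List.getLast?_eq_getLast_of_ne_nil h, Option.getD_some, List.getLast_eq_getElem,
    List.getD_eq_getElem l d (by omega)]

private lemma uRest_nonneg (eu : I → ℝ) (heu : ∀ i, 0 < eu i) (s : List (I →₀ ℕ))
    (t : List (Finset I)) (k : ℕ) : 0 ≤ uRest eu s t k := by
  apply Finset.sum_nonneg; intro j _
  apply Finset.sum_nonneg; intro i _
  split
  · exact mul_nonneg (Nat.cast_nonneg _) (heu _).le
  · exact le_rfl

private lemma uRest_anti (eu : I → ℝ) (heu : ∀ i, 0 < eu i) (s : List (I →₀ ℕ))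
    (t : List (Finset I)) {k k' : ℕ} (hk : k' ≤ k) :
    uRest eu s t k ≤ uRest eu s t k' := by
  apply Finset.sum_le_sum; intro j _
  apply Finset.sum_le_sum; intro i _
  by_cases h : k < j ∨ (j = k ∧ iLast t < (i : WithBot I))
  · rw [if_pos h, if_pos]
    rcases h with h | ⟨rfl, h⟩
    · exact Or.inl (lt_of_le_of_lt hk h)
    · rcases lt_or_eq_of_le hk with h' | h'
      · exact Or.inl h'
      · exact Or.inr ⟨h'.symm, h⟩
  · rw [if_neg h]
    split
    · exact mul_nonneg (Nat.cast_nonneg _) (heu _).le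
    · exact le_refl 0

private lemma finite_uPosSet (eu : I → ℝ) (s : List (I →₀ ℕ)) (t : List (Finset I)) :
    Set.Finite {x | ∃ p, IsInstance s t p ∧ x = uPos eu s t p} := by
  classical
  set F : (Fin t.length → ℕ) → ℝ := fun f =>
    ∑ v : Fin t.length, ∑ i ∈ t.getD v ∅, (s.getD (f v) 0 i : ℝ) * eu i with hF
  have hsub : {x | ∃ p, IsInstance s t p ∧ x = uPos eu s t p} ⊆
      F '' {f | ∀ v, f v ≤ s.length} := by
    rintro x ⟨p, hp, rfl⟩
    refine ⟨fun v => p.getD v 0, fun v => le_of_lt (hp.2.2 v v.2).1, ?_⟩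
    rw [hF]
    simp only [uPos]
    rw [← Fin.sum_univ_eq_sum_range (fun v => ∑ i ∈ t.getD v ∅,
      (s.getD (p.getD v 0) 0 i : ℝ) * eu i) t.length]
  apply Set.Finite.subset _ hsub
  apply Set.Finite.image
  have : {f : Fin t.length → ℕ | ∀ v, f v ≤ s.length} ⊆
      Set.pi Set.univ (fun _ => Set.Iic s.length) := by
    intro f hf v _; exact hf v
  exact Set.Finite.subset (Set.Finite.pi fun _ => Set.finite_Iic _) this

private lemma uPos_mem_uSet (eu : I → ℝ) (s : List (I →₀ ℕ)) (t : List (Finset I))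
    {p : List ℕ} (hp : IsInstance s t p) :
    uPos eu s t p ≤ uSeq eu s t := by
  apply le_csSup ((finite_uPosSet eu s t).bddAbove)
  exact ⟨p, hp, rfl⟩

private lemma uSeq_nonneg (eu : I → ℝ) (heu : ∀ i, 0 < eu i) (s : List (I →₀ ℕ))
    (t : List (Finset I)) (hc : Contains s t) : 0 ≤ uSeq eu s t := by
  obtain ⟨p, hp⟩ := hc
  refine le_trans ?_ (uPos_mem_uSet eu s t hp)
  apply Finset.sum_nonneg; intro v _
  apply Finset.sum_nonneg; intro i _
  exact mul_nonneg (Nat.cast_nonneg _) (heu _).le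

/-- The key per-instance construction and inequality. -/
private lemma key_lemma (eu : I → ℝ) (heu : ∀ i, 0 < eu i)
    (s : List (I →₀ ℕ)) (t t' : List (Finset I))
    (hpre : ExtPrefix t' t) {p : List ℕ} (hp : IsInstance s t p) :
    IsInstance s t' (p.take t'.length) ∧
      uPos eu s t p ≤ uPos eu s t' (p.take t'.length) +
        uRest eu s t' ((p.take t'.length).getLast?.getD 0) := by
  classical
  obtain ⟨hlen, hchain, hpos⟩ := hp
  obtain ⟨hne, hrm, heq, hXne, hXsub, hXlt⟩ := hpre
  set m := t.length with hm
  set r := t'.length with hr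
  have hr1 : 1 ≤ r := List.length_pos_iff.mpr hne
  set p' := p.take r with hp'
  have hp'len : p'.length = r := by
    rw [hp', List.length_take, hlen]; omega
  -- entries of p' agree with p
  have hgetD : ∀ v < r, p'.getD v 0 = p.getD v 0 := by
    intro v hv
    rw [List.getD_eq_getElem p' 0 (by omega), List.getD_eq_getElem p 0 (by rw [hlen]; omega)]
    simp only [hp']
    apply List.getElem_take
  -- monotonicity of p
  have hmono : ∀ u v, u < v → v < m → p.getD u 0 < p.getD v 0 := by
    intro u v huv hv
    have hpw := (List.isChain_iff_pairwise.mp hchain)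
    rw [List.pairwise_iff_getElem] at hpw
    rw [List.getD_eq_getElem p 0 (by omega), List.getD_eq_getElem p 0 (by omega)]
    exact hpw u v (by omega) (by omega) huv
  -- subsets
  have hsub : ∀ v < r, t'.getD v ∅ ⊆ t.getD v ∅ := by
    intro v hv
    by_cases h : v + 1 < r
    · rw [heq v h]
    · have : v = r - 1 := by omega
      subst this; exact hXsub
  have hinst : IsInstance s t' p' := by
    refine ⟨by rw [hp'len], hchain.take r, fun v hv => ?_⟩
    rw [hgetD v hv]
    refine ⟨(hpos v (by omega)).1, fun i hi => (hpos v (by omega)).2 i (hsub v hv hi)⟩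
  refine ⟨hinst, ?_⟩
  -- abbreviations
  set q : ℕ → I → ℝ := fun j i => (s.getD j 0 i : ℝ) * eu i with hq
  have hqnn : ∀ j i, 0 ≤ q j i := fun j i => by rw [hq]; exact mul_nonneg (Nat.cast_nonneg _) (heu _).le
  set k := p'.getLast?.getD 0 with hk
  have hkval : k = p.getD (r - 1) 0 := by
    rw [hk, getD_last_eq p' (by rw [← List.length_pos_iff, hp'len]; omega) 0, hp'len,
      hgetD (r-1) (by omega)]
  set X := t.getD (r-1) ∅ with hX
  set X' := t'.getD (r-1) ∅ with hX'
  -- the last itemset of t'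
  have hlast : iLast t' = X'.max := by
    rw [iLast, getD_last_eq t' hne ∅, ← hr, ← hX']
  -- decompose uPos t p
  have hsplit : uPos eu s t p = uPos eu s t' p' +
      (∑ i ∈ X \ X', q k i + ∑ v ∈ Finset.Ico r m, ∑ i ∈ t.getD v ∅, q (p.getD v 0) i) := by
    have e1 : uPos eu s t p =
        (∑ v ∈ Finset.Ico 0 r, ∑ i ∈ t.getD v ∅, q (p.getD v 0) i) +
        ∑ v ∈ Finset.Ico r m, ∑ i ∈ t.getD v ∅, q (p.getD v 0) i := by
      rw [uPos, ← hm, Finset.range_eq_Ico,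
        ← Finset.sum_Ico_consecutive _ (Nat.zero_le r) hrm]
    have e2 : ∑ v ∈ Finset.Ico 0 r, ∑ i ∈ t.getD v ∅, q (p.getD v 0) i =
        uPos eu s t' p' + ∑ i ∈ X \ X', q k i := by
      have : uPos eu s t' p' = ∑ v ∈ Finset.Ico 0 r, ∑ i ∈ t'.getD v ∅, q (p.getD v 0) i := by
        rw [uPos, ← hr, Finset.range_eq_Ico]
        apply Finset.sum_congr rfl
        intro v hv
        rw [hgetD v (Finset.mem_Ico.mp hv).2]
      rw [this]
      have hsp : ∀ a b : ℕ, a ≤ b → Finset.Ico 0 r = insert (r-1) (Finset.Ico 0 (r-1)) := by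
        intro _ _ _
        rw [Finset.Ico_insert_right (by omega : 0 ≤ r - 1)]
        congr 1; omega
      rw [hsp 0 0 le_rfl, Finset.sum_insert (by simp), Finset.sum_insert (by simp)]
      have hcong : ∑ v ∈ Finset.Ico 0 (r-1), ∑ i ∈ t'.getD v ∅, q (p.getD v 0) i =
          ∑ v ∈ Finset.Ico 0 (r-1), ∑ i ∈ t.getD v ∅, q (p.getD v 0) i := by
        apply Finset.sum_congr rfl
        intro v hv
        rw [heq v (by have := (Finset.mem_Ico.mp hv).2; omega)]
      rw [hcong, ← hkval, ← hX, ← hX']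
      have := Finset.sum_sdiff (f := fun i => q k i) hXsub
      ring_nf
      linarith [this]
    rw [e1, e2]; ring
  rw [hsplit]
  have main : ∑ i ∈ X \ X', q k i +
      ∑ v ∈ Finset.Ico r m, ∑ i ∈ t.getD v ∅, q (p.getD v 0) i ≤ uRest eu s t' k := by
    -- rewrite LHS as a sum over Ico (r-1) m
    set e : ℕ → ℝ := fun v => if v = r - 1 then ∑ i ∈ X \ X', q k i
      else ∑ i ∈ t.getD v ∅, q (p.getD v 0) i with he
    have hE : ∑ i ∈ X \ X', q k i +
        ∑ v ∈ Finset.Ico r m, ∑ i ∈ t.getD v ∅, q (p.getD v 0) i =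
        ∑ v ∈ Finset.Ico (r-1) m, e v := by
      rw [Finset.sum_eq_sum_Ico_succ_bot (by omega : r - 1 < m) e]
      have hrr : r - 1 + 1 = r := by omega
      rw [hrr]
      congr 1
      · rw [he]; simp
      · apply Finset.sum_congr rfl
        intro v hv
        rw [he]
        have : v ≠ r - 1 := by have := (Finset.mem_Ico.mp hv).1; omega
        simp only [this, if_false]
    rw [hE]
    -- R j : the j-th summand of uRest
    set R : ℕ → ℝ := fun j => ∑ i ∈ (s.getD j 0).support,
      if k < j ∨ (j = k ∧ iLast t' < (i : WithBot I)) then q j i else 0 with hR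
    have hRnn : ∀ j, 0 ≤ R j := by
      intro j; apply Finset.sum_nonneg; intro i _
      split
      · exact hqnn j i
      · exact le_refl 0
    have hstep : ∀ v ∈ Finset.Ico (r-1) m, e v ≤ R (p.getD v 0) := by
      intro v hv
      obtain ⟨hv1, hv2⟩ := Finset.mem_Ico.mp hv
      by_cases hvr : v = r - 1
      · subst hvr
        rw [he]; simp only [if_pos rfl]
        rw [hR, ← hkval]
        have hsubsupp : X \ X' ⊆ (s.getD k 0).support := by
          intro i hi
          rw [Finsupp.mem_support_iff]
          have := (hpos (r-1) (by omega)).2 i (Finset.mem_sdiff.mp hi).1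
          rw [← hkval] at this
          omega
        have hcond : ∀ i ∈ X \ X',
            (k < k ∨ (k = k ∧ iLast t' < (i : WithBot I))) := by
          intro i hi
          right
          refine ⟨rfl, ?_⟩
          rw [hlast]
          obtain ⟨b, hb⟩ := Finset.max_of_nonempty hXne
          rw [hb]
          have hbX : b ∈ X' := Finset.mem_of_max hb
          exact WithBot.coe_lt_coe.mpr
            (hXlt i hi b hbX)
        calc ∑ i ∈ X \ X', q k i
            = ∑ i ∈ X \ X', (if k < k ∨ (k = k ∧ iLast t' < (i : WithBot I))
                then q k i else 0) := by
              apply Finset.sum_congr rfl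
              intro i hi
              rw [if_pos (hcond i hi)]
          _ ≤ _ := by
              apply Finset.sum_le_sum_of_subset_of_nonneg hsubsupp
              intro i _ _
              split
              · exact hqnn k i
              · exact le_refl 0
      · have hvr' : r ≤ v := by omega
        rw [he]; simp only [hvr, if_false]
        rw [hR]
        set j := p.getD v 0 with hj
        have hkj : k < j := by
          rw [hkval, hj]
          exact hmono (r-1) v (by omega) hv2
        have hsubsupp : t.getD v ∅ ⊆ (s.getD j 0).support := by
          intro i hi
          rw [Finsupp.mem_support_iff]
          have := (hpos v hv2).2 i hi
          rw [← hj] at this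
          omega
        calc ∑ i ∈ t.getD v ∅, q j i
            = ∑ i ∈ t.getD v ∅, (if k < j ∨ (j = k ∧ iLast t' < (i : WithBot I))
                then q j i else 0) := by
              apply Finset.sum_congr rfl
              intro i hi
              rw [if_pos (Or.inl hkj)]
          _ ≤ _ := by
              apply Finset.sum_le_sum_of_subset_of_nonneg hsubsupp
              intro i _ _
              split
              · exact hqnn j i
              · exact le_refl 0
    calc ∑ v ∈ Finset.Ico (r-1) m, e v ≤ ∑ v ∈ Finset.Ico (r-1) m, R (p.getD v 0) :=
          Finset.sum_le_sum hstep
      _ = ∑ j ∈ (Finset.Ico (r-1) m).image (fun v => p.getD v 0), R j := by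
          rw [Finset.sum_image]
          intro a ha b hb hab
          by_contra hne'
          rcases lt_or_gt_of_ne hne' with h | h
          · exact absurd hab (ne_of_lt (hmono a b h (Finset.mem_Ico.mp hb).2))
          · exact absurd hab.symm (ne_of_lt (hmono b a h (Finset.mem_Ico.mp ha).2))
      _ ≤ ∑ j ∈ Finset.range s.length, R j := by
          apply Finset.sum_le_sum_of_subset_of_nonneg
          · intro j hj
            obtain ⟨v, hv, rfl⟩ := Finset.mem_image.mp hj
            exact Finset.mem_range.mpr (hpos v (Finset.mem_Ico.mp hv).2).1
          · intro j _ _; exact hRnn j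
      _ = uRest eu s t' k := by rw [uRest, hR]
  linarith

end AuxProofs

/-- SEU upper bound: `u(t) ≤ SEU(t')` over a database, for a proper
extension-prefix `t'` of `t`. -/
theorem uDB_le_SEUDB_of_properExtPrefix
    (eu : I → ℝ) (heu : ∀ i, 0 < eu i)
    (D : Multiset (List (I →₀ ℕ)))
    (t t' : List (Finset I))
    (ht : ∀ X ∈ t, X.Nonempty) (ht' : ∀ X ∈ t', X.Nonempty)
    (hpre : ProperExtPrefix t' t) :
    uDB eu D t ≤ SEUDB eu D t' := by
  classical
  rw [uDB, SEUDB]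
  apply Multiset.sum_map_le_sum_map
  intro s _
  by_cases hc : Contains s t
  · obtain ⟨p0, hp0⟩ := hc
    have hc' : Contains s t' := ⟨_, (key_lemma eu heu s t t' hpre.1 hp0).1⟩
    rw [if_pos ⟨p0, hp0⟩, if_pos hc']
    -- uSeq is a csSup; bound every element
    rw [uSeq]
    refine csSup_le ⟨_, ⟨p0, hp0, rfl⟩⟩ ?_
    rintro x ⟨p, hp, rfl⟩
    obtain ⟨hinst, hle⟩ := key_lemma eu heu s t t' hpre.1 hp
    have h1 : uPos eu s t' (p.take t'.length) ≤ uSeq eu s t' :=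
      uPos_mem_uSet eu s t' hinst
    have h2 : uRest eu s t' ((p.take t'.length).getLast?.getD 0) ≤ uRestSeq eu s t' := by
      rw [uRestSeq]
      apply uRest_anti eu heu
      apply Nat.sInf_le
      exact ⟨_, hinst, rfl⟩
    linarith
  · rw [if_neg hc]
    split
    · have h1 : 0 ≤ uSeq eu s t' := uSeq_nonneg eu heu s t' (by assumption)
      have h2 : 0 ≤ uRestSeq eu s t' := uRest_nonneg eu heu s t' _
      linarith
    · exact le_refl 0

end TKUS
end

section
/- (Correctness of the SUR strategy.) Let D be a finite database of q-sequences, let k ≥ 1, let C(D) be the finite set of all sequences contained in some q-sequence of D, and let L ⊆ C(D) be the set of sequences of L with length 1 or 2 (total number of item occurrences equal to 1 or 2). Assume |L| ≥ k and let u_k be the k-th largest value of the multiset {u(t) : t ∈ L}. Then every sequence t ∈ C(D) with u(t) < u_k is not a top-k HUSP; equivalently, every top-k HUSP t satisfies u(t) ≥ u_k. -/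
open scoped Classical

namespace TKUS

variable {I : Type*} [Fintype I] [LinearOrder I]

/-- correctness of the SUR strategy: if `u_k` is the `k`-th largest
utility among the length-1 and length-2 candidate sequences, then every sequence in
the candidate set with utility below `u_k` is not a top-`k` HUSP; equivalently,
every top-`k` HUSP has utility at least `u_k`. -/
theorem SUR_correct
    (eu : I → ℝ) (heu : ∀ i, 0 < eu i)
    (D : Multiset (List (I →₀ ℕ)))
    (k : ℕ) (hk : 1 ≤ k)
    (C : Finset (List (Finset I)))
    (hC : ∀ t : List (Finset I),
      t ∈ C ↔ ((∀ X ∈ t, X.Nonempty) ∧ ∃ s ∈ D, Contains s t))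
    (L : Finset (List (Finset I)))
    (hL : L = C.filter fun t => seqLen t = 1 ∨ seqLen t = 2)
    (hcard : k ≤ L.card)
    (uk : ℝ)
    (huk : uk = ((L.val.map (uDB eu D)).sort (· ≤ ·)).getD (L.card - k) 0) :
    (∀ t ∈ C, uDB eu D t < uk → ¬ IsTopK eu D k C t) ∧
    (∀ t : List (Finset I), IsTopK eu D k C t → uk ≤ uDB eu D t) := by
  classical
  set u := uDB eu D with hu
  set l := ((L.val.map u).sort (· ≤ ·)) with hl
  have hsorted : l.Pairwise (· ≤ ·) := Multiset.pairwise_sort _ _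
  have hlen : l.length = L.card := by
    rw [hl, Multiset.length_sort, Multiset.card_map]; rfl
  set j := L.card - k with hj
  have hjlt : j < l.length := by omega
  have hukj : uk = l[j] := by
    rw [huk, List.getD_eq_getElem l 0 hjlt]
  -- all elements from index j on are ≥ uk
  have hge : ∀ m : ℕ, j ≤ m → (hm : m < l.length) → uk ≤ l[m] := by
    intro m hjm hm
    rcases eq_or_lt_of_le hjm with h | h
    · subst h; rw [hukj]
    · rw [hukj]
      exact List.pairwise_iff_getElem.mp hsorted j m hjlt hm h
  -- count of elements ≥ uk in l is at least k
  have hcount : k ≤ l.countP (fun x => decide (uk ≤ x)) := by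
    have hsplit : l = l.take j ++ l.drop j := (List.take_append_drop j l).symm
    have hdropall : ∀ x ∈ l.drop j, uk ≤ x := by
      intro x hx
      rw [List.mem_iff_getElem] at hx
      obtain ⟨i, hi, rfl⟩ := hx
      rw [List.getElem_drop]
      exact hge (j + i) (Nat.le_add_right _ _) _
    have hdlen : (l.drop j).length = k := by
      rw [List.length_drop, hlen]; omega
    calc k = (l.drop j).countP (fun x => decide (uk ≤ x)) := by
              rw [List.countP_eq_length.mpr (by intro x hx; simpa using hdropall x hx), hdlen]
      _ ≤ l.countP (fun x => decide (uk ≤ x)) := by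
              conv_rhs => rw [hsplit]
              rw [List.countP_append]; omega
  -- hence at least k elements of L have utility ≥ uk
  have hLk : k ≤ (L.filter fun r => uk ≤ u r).card := by
    have h1 : (L.filter fun r => uk ≤ u r).card
        = Multiset.countP (fun x => uk ≤ x) (L.val.map u) := by
      rw [Multiset.countP_map]
      rfl
    have h2 : Multiset.countP (fun x => uk ≤ x) (L.val.map u)
        = l.countP (fun x => decide (uk ≤ x)) := by
      conv_lhs => rw [← Multiset.sort_eq (L.val.map u) (· ≤ ·)]
      rfl
    omega
  have hLC : L ⊆ C := by rw [hL]; exact Finset.filter_subset _ _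
  have main : ∀ t ∈ C, uDB eu D t < uk → ¬ IsTopK eu D k C t := by
    intro t _ hlt htop
    have hsub : (L.filter fun r => uk ≤ u r) ⊆ C.filter fun r => uDB eu D t < uDB eu D r := by
      intro r hr
      rw [Finset.mem_filter] at hr ⊢
      exact ⟨hLC hr.1, lt_of_lt_of_le hlt hr.2⟩
    have := Finset.card_le_card hsub
    have := htop.2
    omega
  refine ⟨main, fun t htop => ?_⟩
  by_contra hlt
  exact main t htop.1 (lt_of_not_ge hlt) htop

end TKUS
end
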